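/- Let G be a transitively closed episode, s a sequence, ρ a window size, and let n ≠ m be nodes of G such that any edges between n and m are weak and every instance i ∈ inst(G) satisfies ts(i(n)) = ts(i(m)). Let G' be the episode obtained from G by merging n and m into a single node carrying the events of both nodes, keeping all edges between {n, m} and the other nodes and discarding edges between n and m. Then G ⪯ G' and fr(G; s) = fr(G'; s). -/

import Mathlib

/-- A sequence event: a unique id, a label (from alphabet encoded as `ℕ`),
and an integer time stamp. -/
structure SeqEvent where
  id : ℕ
  lab : ℕ
  ts : ℤ
deriving DecidableEq

/-- An event sequence: a finite collection of sequence events with distinct ids,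
whose time stamps are monotone in the ids. -/
structure EventSeq where
  events : Finset SeqEvent
  id_inj : ∀ e ∈ events, ∀ f ∈ events, e.id = f.id → e = f
  ts_mono : ∀ e ∈ events, ∀ f ∈ events, e.id ≤ f.id → e.ts ≤ f.ts

/-- An episode: a finite set of episode events (identified by ids in `ℕ`) with labels,
a finite set of graph nodes, a map from events to nodes (surjectivity and the DAG
property are recorded in `Episode.WellFormed`), and weak and proper edges. -/
structure Episode where
  events : Finset ℕ
  lab : ℕ → ℕ
  nodes : Finset ℕ
  node : ℕ → ℕ
  weak : ℕ → ℕ → Prop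
  proper : ℕ → ℕ → Prop

namespace Episode

/-- An edge of the episode graph (weak or proper). -/
def edge (G : Episode) (a b : ℕ) : Prop := G.weak a b ∨ G.proper a b

/-- `G.Desc m n` : `n` is a descendant of `m`, i.e. there is a directed path from `m` to `n`. -/
def Desc (G : Episode) (m n : ℕ) : Prop := Relation.TransGen G.edge m n

/-- `G.PDesc m n` : `n` is a proper descendant of `m`, i.e. some directed path
from `m` to `n` contains a proper edge. -/
def PDesc (G : Episode) (m n : ℕ) : Prop :=
  ∃ a b, Relation.ReflTransGen G.edge m a ∧ G.proper a b ∧ Relation.ReflTransGen G.edge b n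

/-- Well-formedness of an episode: events map into the nodes, every node carries an
event, edges run between nodes, the weak and proper edges are disjoint, and the
graph is acyclic (a DAG). -/
structure WellFormed (G : Episode) : Prop where
  node_mem : ∀ e ∈ G.events, G.node e ∈ G.nodes
  node_surj : ∀ n ∈ G.nodes, ∃ e ∈ G.events, G.node e = n
  weak_mem : ∀ a b, G.weak a b → a ∈ G.nodes ∧ b ∈ G.nodes
  proper_mem : ∀ a b, G.proper a b → a ∈ G.nodes ∧ b ∈ G.nodes
  weak_proper_disjoint : ∀ a b, G.weak a b → G.proper a b → False
  acyclic : ∀ n, ¬ G.Desc n n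

/-- The transitive closure of an episode: add an edge from every node to each of its
descendants, proper if the descendant is a proper descendant, weak otherwise. -/
def tcl (G : Episode) : Episode :=
  { G with
    proper := fun a b => G.PDesc a b
    weak := fun a b => G.Desc a b ∧ ¬ G.PDesc a b }

/-- An episode is transitively closed if it coincides with its transitive closure. -/
def TransClosed (G : Episode) : Prop :=
  (∀ a b, G.proper a b ↔ G.PDesc a b) ∧
  (∀ a b, G.weak a b ↔ (G.Desc a b ∧ ¬ G.PDesc a b))

end Episode

/-- `m` is a coverage mapping of episode `G` into sequence `s`: an injective map from
the episode events into the sequence events preserving labels, mapping events of one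
node to a common time stamp, and respecting weak and proper edges. -/
def IsCoverMap (s : EventSeq) (G : Episode) (m : ℕ → SeqEvent) : Prop :=
  (∀ e ∈ G.events, m e ∈ s.events) ∧
  Set.InjOn m ↑G.events ∧
  (∀ e ∈ G.events, (m e).lab = G.lab e) ∧
  (∀ e ∈ G.events, ∀ f ∈ G.events, G.node e = G.node f → (m e).ts = (m f).ts) ∧
  (∀ e ∈ G.events, ∀ f ∈ G.events, G.Desc (G.node f) (G.node e) → (m f).ts ≤ (m e).ts) ∧
  (∀ e ∈ G.events, ∀ f ∈ G.events, G.PDesc (G.node f) (G.node e) → (m f).ts < (m e).ts)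

/-- A sequence `s` covers an episode `G`. -/
def Covers (s : EventSeq) (G : Episode) : Prop := ∃ m, IsCoverMap s G m

/-- `G ⪯ H` : every sequence covering `H` also covers `G`. -/
def Subepisode (G H : Episode) : Prop := ∀ s : EventSeq, Covers s H → Covers s G

/-- `G ∼ H` : `G ⪯ H` and `H ⪯ G`. -/
def EpisodeSimilar (G H : Episode) : Prop := Subepisode G H ∧ Subepisode H G

/-- The window `s[i, j]`: the subsequence of events with time stamps in `[i, j]`. -/
def EventSeq.window (s : EventSeq) (i j : ℤ) : EventSeq where
  events := s.events.filter (fun e => i ≤ e.ts ∧ e.ts ≤ j)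
  id_inj := fun e he f hf h =>
    s.id_inj e (Finset.mem_filter.mp he).1 f (Finset.mem_filter.mp hf).1 h
  ts_mono := fun e he f hf h =>
    s.ts_mono e (Finset.mem_filter.mp he).1 f (Finset.mem_filter.mp hf).1 h

/-- The support `fr(G; s)` with window size `ρ`: the number of integers `t` such that
the window `s[t, t + ρ - 1]` covers `G` (as an extended natural number). -/
noncomputable def support (ρ : ℤ) (s : EventSeq) (G : Episode) : ℕ∞ :=
  {t : ℤ | Covers (s.window t (t + ρ - 1)) G}.encard

/-- `first(i)` : the smallest time stamp in the range of the instance. -/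
noncomputable def instFirst (G : Episode) (m : ℕ → SeqEvent) : ℤ :=
  sInf ((fun e => (m e).ts) '' ↑G.events)

/-- `last(i)` : the largest time stamp in the range of the instance. -/
noncomputable def instLast (G : Episode) (m : ℕ → SeqEvent) : ℤ :=
  sSup ((fun e => (m e).ts) '' ↑G.events)

/-- `m` is an instance of `G` in `s` (with window size `ρ`): a coverage mapping of `G`
into `s` such that no used sequence event can be replaced by an unused one with the same
label, the same time stamp and a smaller id, and whose span is less than `ρ`. -/
def IsInstance (ρ : ℤ) (s : EventSeq) (G : Episode) (m : ℕ → SeqEvent) : Prop :=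
  IsCoverMap s G m ∧
  (∀ e ∈ G.events, ∀ f ∈ s.events, (∀ e' ∈ G.events, m e' ≠ f) →
      f.lab = (m e).lab → f.ts = (m e).ts → ¬ f.id < (m e).id) ∧
  instLast G m - instFirst G m ≤ ρ - 1

/-- The representative of a node after merging `m` into `n`. -/
def mergeRep (n m x : ℕ) : ℕ := if x = m then n else x

/-- The episode obtained from `G` by merging the nodes `n` and `m` into a single node
(namely `n`) carrying the events of both nodes, keeping all edges between `{n, m}` and
the other nodes and discarding the edges between `n` and `m`. -/
def mergeNodes (G : Episode) (n m : ℕ) : Episode where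
  events := G.events
  lab := G.lab
  nodes := G.nodes.erase m
  node := fun e => mergeRep n m (G.node e)
  proper := fun a b =>
    ∃ a' b', G.proper a' b' ∧ a = mergeRep n m a' ∧ b = mergeRep n m b'
  weak := fun a b =>
    ¬ (a = n ∧ b = n) ∧
    (∃ a' b', G.weak a' b' ∧ a = mergeRep n m a' ∧ b = mergeRep n m b') ∧
    ¬ ∃ a' b', G.proper a' b' ∧ a = mergeRep n m a' ∧ b = mergeRep n m b'

/-!
Every cover of `G'` is a cover of `G`, since paths of `G` map to paths of `G'`; this gives
`G ⪯ G'` and one inequality of supports. Conversely, a cover of `G` in a window can be turned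
into an instance of `G` with the same time stamps, by trading used sequence events for unused
ones of the same label and time stamp but smaller id as long as possible. By hypothesis that
instance gives `n` and `m` a common time stamp, so the original cover does as well, and such a
cover respects every edge of `G'`: a path of `G'` lifts to a chain of paths of `G`, glued at
the events of `n` and `m`.
-/

open Episode Relation

theorem Int.sSup_sub_sInf_le_of_subset_Icc {S : Set ℤ} {a b : ℤ} (hab : a ≤ b)
    (hS : S ⊆ Set.Icc a b) : sSup S - sInf S ≤ b - a := by
  rcases S.eq_empty_or_nonempty with rfl | hne
  · simpa [Int.csSup_empty, Int.csInf_empty] using hab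
  · have hsup : sSup S ≤ b := csSup_le hne fun x hx => (hS hx).2
    have hinf : a ≤ sInf S := le_csInf hne fun x hx => (hS hx).1
    omega

theorem EventSeq.mem_window_events {s : EventSeq} {i j : ℤ} {e : SeqEvent} :
    e ∈ (s.window i j).events ↔ e ∈ s.events ∧ i ≤ e.ts ∧ e.ts ≤ j :=
  Finset.mem_filter

theorem Episode.WellFormed.exists_events_of_edge {G : Episode} (hG : G.WellFormed) {a b : ℕ}
    (h : G.edge a b) : (∃ e ∈ G.events, G.node e = a) ∧ ∃ f ∈ G.events, G.node f = b := by
  have hab : a ∈ G.nodes ∧ b ∈ G.nodes := h.elim (hG.weak_mem a b) (hG.proper_mem a b)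
  exact ⟨hG.node_surj a hab.1, hG.node_surj b hab.2⟩

def SameStamp (G : Episode) (c : ℕ → SeqEvent) (n m : ℕ) : Prop :=
  ∀ e ∈ G.events, ∀ f ∈ G.events, G.node e = n → G.node f = m → (c e).ts = (c f).ts

theorem SameStamp.of_ts_eq {G : Episode} {c c' : ℕ → SeqEvent} {n m : ℕ}
    (h : SameStamp G c n m) (hts : ∀ e ∈ G.events, (c e).ts = (c' e).ts) :
    SameStamp G c' n m := fun e he f hf hen hfm => by
  rw [← hts e he, ← hts f hf]
  exact h e he f hf hen hfm

section MergeNodes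

variable {G : Episode} {n m : ℕ}

theorem mergeRep_eq_mergeRep {a b : ℕ} (h : mergeRep n m a = mergeRep n m b) :
    a = b ∨ (a = n ∧ b = m) ∨ (a = m ∧ b = n) := by
  unfold mergeRep at h
  split_ifs at h <;> subst_vars <;> tauto

theorem mergeNodes_edge_mergeRep {a b : ℕ} (h : G.edge a b)
    (hne : mergeRep n m a ≠ mergeRep n m b) :
    (mergeNodes G n m).edge (mergeRep n m a) (mergeRep n m b) := by
  rcases h with hw | hp
  · by_cases hp' : ∃ a' b', G.proper a' b' ∧ mergeRep n m a = mergeRep n m a' ∧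
        mergeRep n m b = mergeRep n m b'
    · exact Or.inr hp'
    · exact Or.inl ⟨fun ⟨ha, hb⟩ => hne (ha.trans hb.symm), ⟨a, b, hw, rfl, rfl⟩, hp'⟩
  · exact Or.inr ⟨a, b, hp, rfl, rfl⟩

theorem mergeNodes_reflTransGen_mergeRep {a b : ℕ} (h : ReflTransGen G.edge a b) :
    ReflTransGen (mergeNodes G n m).edge (mergeRep n m a) (mergeRep n m b) :=
  ReflTransGen.lift' (mergeRep n m) (fun x y hxy => by
    by_cases hrep : mergeRep n m x = mergeRep n m y
    · show ReflTransGen _ (mergeRep n m x) (mergeRep n m y)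
      rw [hrep]
    · exact .single (mergeNodes_edge_mergeRep hxy hrep)) a b h

theorem mergeNodes_pDesc_mergeRep {a b : ℕ} (h : G.PDesc a b) :
    (mergeNodes G n m).PDesc (mergeRep n m a) (mergeRep n m b) := by
  obtain ⟨x, y, hax, hxy, hyb⟩ := h
  exact ⟨_, _, mergeNodes_reflTransGen_mergeRep hax, ⟨x, y, hxy, rfl, rfl⟩,
    mergeNodes_reflTransGen_mergeRep hyb⟩

theorem exists_edge_of_mergeNodes_edge {a b : ℕ} (h : (mergeNodes G n m).edge a b) :
    ∃ a' b', G.edge a' b' ∧ a = mergeRep n m a' ∧ b = mergeRep n m b' := by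
  rcases h with ⟨-, ⟨a', b', hw, ha, hb⟩, -⟩ | ⟨a', b', hp, ha, hb⟩
  · exact ⟨a', b', Or.inl hw, ha, hb⟩
  · exact ⟨a', b', Or.inr hp, ha, hb⟩

end MergeNodes

namespace IsCoverMap

variable {s : EventSeq} {G : Episode} {c : ℕ → SeqEvent}

theorem ts_eq (hc : IsCoverMap s G c) {e f : ℕ} (he : e ∈ G.events) (hf : f ∈ G.events)
    (h : G.node e = G.node f) : (c e).ts = (c f).ts :=
  hc.2.2.2.1 e he f hf h

theorem ts_le (hc : IsCoverMap s G c) {f e : ℕ} (hf : f ∈ G.events) (he : e ∈ G.events)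
    (h : G.Desc (G.node f) (G.node e)) : (c f).ts ≤ (c e).ts :=
  hc.2.2.2.2.1 e he f hf h

theorem ts_lt (hc : IsCoverMap s G c) {f e : ℕ} (hf : f ∈ G.events) (he : e ∈ G.events)
    (h : G.PDesc (G.node f) (G.node e)) : (c f).ts < (c e).ts :=
  hc.2.2.2.2.2 e he f hf h

theorem of_mergeNodes {n m : ℕ} (hc : IsCoverMap s (mergeNodes G n m) c) :
    IsCoverMap s G c := by
  refine ⟨hc.1, hc.2.1, hc.2.2.1, fun e he f hf hef => hc.ts_eq he hf (by simp [mergeNodes, hef]),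
    fun e he f hf hfe => ?_, fun e he f hf hfe => hc.ts_lt hf he (mergeNodes_pDesc_mergeRep hfe)⟩
  rcases reflTransGen_iff_eq_or_transGen.mp
      (mergeNodes_reflTransGen_mergeRep (n := n) (m := m) hfe.to_reflTransGen) with heq | hdesc
  · exact (hc.ts_eq hf he heq.symm).le
  · exact hc.ts_le hf he hdesc

section SameStamp

variable {n m : ℕ} (hc : IsCoverMap s G c) (hsame : SameStamp G c n m)
include hc hsame

theorem ts_eq_of_mergeRep_eq {e f : ℕ} (he : e ∈ G.events) (hf : f ∈ G.events)
    (h : mergeRep n m (G.node e) = mergeRep n m (G.node f)) : (c e).ts = (c f).ts := by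
  rcases mergeRep_eq_mergeRep h with h | ⟨hen, hfm⟩ | ⟨hem, hfn⟩
  · exact hc.ts_eq he hf h
  · exact hsame e he f hf hen hfm
  · exact (hsame f hf e he hfn hem).symm

theorem ts_le_of_mergeNodes_reflTransGen (hG : G.WellFormed) {f e : ℕ} (hf : f ∈ G.events)
    (he : e ∈ G.events) (h : ReflTransGen (mergeNodes G n m).edge
      (mergeRep n m (G.node f)) (mergeRep n m (G.node e))) : (c f).ts ≤ (c e).ts := by
  generalize hv : mergeRep n m (G.node e) = v at h
  induction h generalizing e with
  | refl => exact (hc.ts_eq_of_mergeRep_eq hsame hf he hv.symm).le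
  | tail _ hwv ih =>
    obtain ⟨a, b, hab, rfl, rfl⟩ := exists_edge_of_mergeNodes_edge hwv
    obtain ⟨⟨g, hg, rfl⟩, ⟨g', hg', rfl⟩⟩ := hG.exists_events_of_edge hab
    calc (c f).ts ≤ (c g).ts := ih hg rfl
      _ ≤ (c g').ts := hc.ts_le hg hg' (.single hab)
      _ = (c e).ts := hc.ts_eq_of_mergeRep_eq hsame hg' he hv.symm

theorem mergeNodes (hG : G.WellFormed) : IsCoverMap s (mergeNodes G n m) c := by
  refine ⟨hc.1, hc.2.1, hc.2.2.1, fun e he f hf h => hc.ts_eq_of_mergeRep_eq hsame he hf h,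
    fun e he f hf hfe => hc.ts_le_of_mergeNodes_reflTransGen hsame hG hf he hfe.to_reflTransGen,
    fun e he f hf hfe => ?_⟩
  obtain ⟨_, _, hfa, ⟨a, b, hab, rfl, rfl⟩, hbe⟩ := hfe
  obtain ⟨⟨g, hg, rfl⟩, ⟨g', hg', rfl⟩⟩ := hG.exists_events_of_edge (Or.inr hab)
  calc (c f).ts ≤ (c g).ts := hc.ts_le_of_mergeNodes_reflTransGen hsame hG hf hg hfa
    _ < (c g').ts := hc.ts_lt hg hg' ⟨_, _, .refl, hab, .refl⟩
    _ ≤ (c e).ts := hc.ts_le_of_mergeNodes_reflTransGen hsame hG hg' he hbe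

end SameStamp

theorem of_ts_eq (hc : IsCoverMap s G c) {c' : ℕ → SeqEvent}
    (hmem : ∀ e ∈ G.events, c' e ∈ s.events) (hinj : Set.InjOn c' G.events)
    (hlab : ∀ e ∈ G.events, (c' e).lab = (c e).lab)
    (hts : ∀ e ∈ G.events, (c' e).ts = (c e).ts) : IsCoverMap s G c' := by
  refine ⟨hmem, hinj, fun e he => (hlab e he).trans (hc.2.2.1 e he), fun e he f hf h => ?_,
    fun e he f hf h => ?_, fun e he f hf h => ?_⟩ <;> rw [hts e he, hts f hf]
  exacts [hc.ts_eq he hf h, hc.ts_le hf he h, hc.ts_lt hf he h]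

/-- Take a relabelling of `c` with minimal total id: replacing a used event by an unused one
with smaller id would lower the total. -/
theorem exists_minimal (hc : IsCoverMap s G c) :
    ∃ c', IsCoverMap s G c' ∧
      (∀ e ∈ G.events, ∀ f ∈ s.events, (∀ e' ∈ G.events, c' e' ≠ f) →
        f.lab = (c' e).lab → f.ts = (c' e).ts → ¬ f.id < (c' e).id) ∧
      ∀ e ∈ G.events, (c' e).ts = (c e).ts := by
  classical
  let S : Set (ℕ → SeqEvent) := {c' | (∀ e ∈ G.events, c' e ∈ s.events) ∧
    Set.InjOn c' G.events ∧ ∀ e ∈ G.events, (c' e).lab = (c e).lab ∧ (c' e).ts = (c e).ts}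
  obtain ⟨c', ⟨hmem, hinj, hsame⟩, hmin⟩ :=
    (measure fun c' : ℕ → SeqEvent => ∑ e ∈ G.events, (c' e).id).wf.has_min S
      ⟨c, hc.1, hc.2.1, fun _ _ => ⟨rfl, rfl⟩⟩
  refine ⟨c', hc.of_ts_eq hmem hinj (fun e he => (hsame e he).1) (fun e he => (hsame e he).2),
    fun e he f hf hunused hlab hts hlt => ?_, fun e he => (hsame e he).2⟩
  refine hmin (Function.update c' e f) ⟨fun x hx => ?_, fun x hx y hy hxy => ?_, fun x hx => ?_⟩ ?_
  · rw [Function.update_apply]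
    split_ifs
    exacts [hf, hmem x hx]
  · simp only [Function.update_apply] at hxy
    split_ifs at hxy with hxe hye hye
    · exact hxe.trans hye.symm
    · exact absurd hxy.symm (hunused y hy)
    · exact absurd hxy (hunused x hx)
    · exact hinj hx hy hxy
  · rw [Function.update_apply]
    split_ifs with hxe
    · subst hxe
      exact ⟨hlab.trans (hsame x hx).1, hts.trans (hsame x hx).2⟩
    · exact hsame x hx
  · show ∑ x ∈ G.events, (Function.update c' e f x).id < ∑ x ∈ G.events, (c' x).id
    refine Finset.sum_lt_sum (fun x _ => ?_) ⟨e, he, by simpa using hlt⟩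
    rw [Function.update_apply]
    split_ifs with hxe
    · exact hxe ▸ hlt.le
    · exact le_rfl

theorem of_window {i j : ℤ} (hc : IsCoverMap (s.window i j) G c) : IsCoverMap s G c :=
  ⟨fun e he => (EventSeq.mem_window_events.mp (hc.1 e he)).1, hc.2⟩

theorem exists_isInstance_of_window {ρ t : ℤ} (hρ : 1 ≤ ρ)
    (hc : IsCoverMap (s.window t (t + ρ - 1)) G c) :
    ∃ i, IsInstance ρ s G i ∧ ∀ e ∈ G.events, (i e).ts = (c e).ts := by
  obtain ⟨i, hi, hmin, hts⟩ := hc.of_window.exists_minimal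
  refine ⟨i, ⟨hi, hmin, ?_⟩, hts⟩
  have hspan := Int.sSup_sub_sInf_le_of_subset_Icc (S := (fun e => (i e).ts) '' G.events)
    (a := t) (b := t + ρ - 1) (by omega) (by
      rintro _ ⟨e, he, rfl⟩
      show (i e).ts ∈ _
      rw [hts e he]
      exact (EventSeq.mem_window_events.mp (hc.1 e he)).2)
  simp only [instLast, instFirst]
  omega

end IsCoverMap

theorem merge_subepisode_and_support_eq_general (G : Episode)
    (hG : G.WellFormed)
    (s : EventSeq) (ρ : ℤ) (hρ : 1 ≤ ρ)
    (n m : ℕ)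
    (hts : ∀ i, IsInstance ρ s G i →
      ∀ e ∈ G.events, ∀ f ∈ G.events,
        G.node e = n → G.node f = m → (i e).ts = (i f).ts) :
    Subepisode G (mergeNodes G n m) ∧
      support ρ s G = support ρ s (mergeNodes G n m) := by
  have hsub : Subepisode G (mergeNodes G n m) := fun _ ⟨c, hc⟩ => ⟨c, hc.of_mergeNodes⟩
  refine ⟨hsub, congrArg Set.encard (Set.ext fun t => ⟨fun ⟨c, hc⟩ => ?_, hsub _⟩)⟩
  obtain ⟨i, hi, hits⟩ := hc.exists_isInstance_of_window hρ
  exact ⟨c, hc.mergeNodes (SameStamp.of_ts_eq (hts i hi) hits) hG⟩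

/-- let `G` be a transitively closed episode and `n ≠ m` nodes of `G`
such that any edges between `n` and `m` are weak and every instance gives the events of
`n` and of `m` a common time stamp. Merging `n` and `m` yields an episode `G'` with
`G ⪯ G'` and `fr(G; s) = fr(G'; s)`. -/
theorem merge_subepisode_and_support_eq (G : Episode)
    (hG : G.WellFormed) (hGt : G.TransClosed)
    (s : EventSeq) (ρ : ℤ) (hρ : 1 ≤ ρ)
    (n m : ℕ) (hn : n ∈ G.nodes) (hm : m ∈ G.nodes) (hnm : n ≠ m)
    (hp1 : ¬ G.proper n m) (hp2 : ¬ G.proper m n)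
    (hts : ∀ i, IsInstance ρ s G i →
      ∀ e ∈ G.events, ∀ f ∈ G.events,
        G.node e = n → G.node f = m → (i e).ts = (i f).ts) :
    Subepisode G (mergeNodes G n m) ∧
      support ρ s G = support ρ s (mergeNodes G n m) :=
  merge_subepisode_and_support_eq_general G hG s ρ hρ n m hts
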